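/- arXiv:2011.14066 — 2 statements merged into one kernel-verified Lean document; each statement's English description precedes it below -/
import Mathlib

section
/- In the setting of the coupled iteration above, suppose additionally ‖D̃₂(t)‖ ≤ c_λ/(t+1)^α and ‖w₁(t) − c‖₂ ≤ c_conv/(t+1)^β for all t ≥ 0 with α + β > 1. Then w₂(t) converges to a limit w₂(∞), and ‖w₂(∞) − w₂(0)‖₂ ≤ η·c_λ·λ_max(Λ₁)²·(c_conv·(1 + 1/(α+β−1)) + ‖w₁(0)‖₂). -/
open Matrix Filter
open Finset

/-- Euclidean (ℓ2) norm of a vector. -/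
noncomputable def euclNorm {m : Type*} [Fintype m] (v : m → ℝ) : ℝ :=
  Real.sqrt (∑ i, v i ^ 2)

/-- ℓ2 → ℓ2 operator norm of a (possibly rectangular) matrix. -/
noncomputable def matOpNorm {m n : Type*} [Fintype m] [Fintype n] [DecidableEq n]
    (A : Matrix m n ℝ) : ℝ :=
  ‖LinearMap.toContinuousLinearMap (Matrix.toEuclideanLin (𝕜 := ℝ) A)‖

lemma euclNorm_nonneg {m : Type*} [Fintype m] (v : m → ℝ) : 0 ≤ euclNorm v :=
  Real.sqrt_nonneg _

lemma euclNorm_eq {m : Type*} [Fintype m] (v : m → ℝ) :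
    euclNorm v = ‖(WithLp.equiv 2 (m → ℝ)).symm v‖ := by
  rw [EuclideanSpace.norm_eq]
  unfold euclNorm
  congr 1
  refine Finset.sum_congr rfl fun i _ => ?_
  rw [Real.norm_eq_abs, sq_abs]
  rfl

lemma euclNorm_mulVec_le {m n : Type*} [Fintype m] [Fintype n] [DecidableEq n]
    (A : Matrix m n ℝ) (x : n → ℝ) :
    euclNorm (A *ᵥ x) ≤ matOpNorm A * euclNorm x := by
  rw [euclNorm_eq, euclNorm_eq]
  exact ((Matrix.toEuclideanLin (𝕜 := ℝ) A).toContinuousLinearMap).le_opNorm ((WithLp.equiv 2 (n → ℝ)).symm x)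

lemma euclNorm_diag_sq_mulVec_le {n : Type*} [Fintype n] [DecidableEq n]
    (g : n → ℝ) (hg : ∀ i, 0 < g i) (x : n → ℝ) :
    euclNorm ((Matrix.diagonal g) ^ 2 *ᵥ x) ≤ (⨆ i, g i) ^ 2 * euclNorm x := by
  set M := ⨆ i, g i with hM
  have hle : ∀ i, g i ≤ M := fun i =>
    le_ciSup (Set.Finite.bddAbove (Set.finite_range g)) i
  have hM0 : 0 ≤ M ^ 2 := by
    rcases isEmpty_or_nonempty n with h | h
    · simp [hM, Real.iSup_of_isEmpty]
    · exact sq_nonneg M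
  have hentry : ∀ i, ((Matrix.diagonal g) ^ 2 *ᵥ x) i = g i ^ 2 * x i := by
    intro i
    rw [sq, Matrix.diagonal_mul_diagonal, Matrix.mulVec_diagonal]
    ring
  unfold euclNorm
  have h1 : ∑ i, (((Matrix.diagonal g) ^ 2 *ᵥ x) i) ^ 2 ≤ (M ^ 2) ^ 2 * ∑ i, x i ^ 2 := by
    rw [Finset.mul_sum]
    refine Finset.sum_le_sum fun i _ => ?_
    rw [hentry i, mul_pow]
    have : (g i ^ 2) ^ 2 ≤ (M ^ 2) ^ 2 := by
      calc (g i ^ 2) ^ 2 = g i ^ 4 := by ring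
        _ ≤ M ^ 4 := pow_le_pow_left₀ (hg i).le (hle i) 4
        _ = (M ^ 2) ^ 2 := by ring
    nlinarith [sq_nonneg (x i), sq_nonneg (g i ^ 2)]
  calc Real.sqrt (∑ i, (((Matrix.diagonal g) ^ 2 *ᵥ x) i) ^ 2)
      ≤ Real.sqrt ((M ^ 2) ^ 2 * ∑ i, x i ^ 2) := Real.sqrt_le_sqrt h1
    _ = M ^ 2 * Real.sqrt (∑ i, x i ^ 2) := by
        rw [Real.sqrt_mul (sq_nonneg _), Real.sqrt_sq hM0]

lemma summable_shift_rpow {p : ℝ} (hp : 1 < p) :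
    Summable (fun n : ℕ => ((n : ℝ) + 1) ^ (-p)) := by
  have h : Summable (fun n : ℕ => (n : ℝ) ^ (-p)) :=
    Real.summable_nat_rpow.2 (by linarith)
  have := (summable_nat_add_iff 1).2 h
  convert this using 2 with n
  push_cast
  · rfl
  · push_cast
    ring_nf

lemma tsum_shift_rpow_le {p : ℝ} (hp : 1 < p) :
    ∑' n : ℕ, ((n : ℝ) + 1) ^ (-p) ≤ 1 + 1 / (p - 1) := by
  apply Real.tsum_le_of_sum_range_le
  · intro n; positivity
  · intro n
    induction n with
    | zero =>
      simp only [Finset.range_zero, Finset.sum_empty]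
      have : (0:ℝ) < p - 1 := by linarith
      positivity
    | succ m _ =>
      rw [Finset.sum_range_succ']
      have h0 : ((0 : ℕ) : ℝ) + 1 = 1 := by norm_num
      have hterm0 : (((0:ℕ) : ℝ) + 1) ^ (-p) = 1 := by rw [h0, Real.one_rpow]
      have hanti : AntitoneOn (fun x : ℝ => x ^ (-p)) (Set.Icc (1:ℝ) (1 + m)) := by
        intro x hx y hy hxy
        have hx0 : (0:ℝ) < x := lt_of_lt_of_le one_pos hx.1
        have hy0 : (0:ℝ) < y := lt_of_lt_of_le one_pos hy.1
        show y ^ (-p) ≤ x ^ (-p)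
        rw [Real.rpow_neg hx0.le, Real.rpow_neg hy0.le]
        exact inv_anti₀ (Real.rpow_pos_of_pos hx0 p)
          (Real.rpow_le_rpow hx0.le hxy (by linarith))
      have hsum := hanti.sum_le_integral
      have hint : ∫ x in (1:ℝ)..(1 + m), x ^ (-p) ≤ 1 / (p - 1) := by
        rw [integral_rpow (Or.inr ⟨by linarith, by
          rw [Set.mem_uIcc]; push_neg
          constructor <;> intro h <;> nlinarith [(Nat.cast_nonneg m : (0:ℝ) ≤ m)]⟩)]
        have hq : (0:ℝ) ≤ (1 + (m:ℝ)) ^ (-p + 1) := Real.rpow_nonneg (by positivity) _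
        have hne : p - 1 ≠ 0 := by linarith
        have hpos : (0:ℝ) < p - 1 := by linarith
        rw [Real.one_rpow]
        have heq : ((1 + (m:ℝ)) ^ (-p + 1) - 1) / (-p + 1)
            = (1 - (1 + (m:ℝ)) ^ (-p + 1)) / (p - 1) := by
          rw [show (-p + 1 : ℝ) = -(p - 1) from by ring, div_neg, ← neg_div, neg_sub]
        rw [heq]
        have h1 : 1 - (1 + (m:ℝ)) ^ (-p + 1) ≤ 1 := by linarith
        calc (1 - (1 + (m:ℝ)) ^ (-p + 1)) / (p - 1) ≤ 1 / (p - 1) := by gcongr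
          _ = 1 / (p - 1) := rfl
      have hsum' : ∑ i ∈ Finset.range m, (((i+1 : ℕ) : ℝ) + 1) ^ (-p) ≤ 1 / (p - 1) := by
        refine le_trans (le_of_eq ?_) (le_trans hsum hint)
        refine Finset.sum_congr rfl fun i _ => ?_
        push_cast
        congr 1
        ring
      rw [hterm0]
      linarith

/-- In the coupled iteration `w₂(t+1) = w₂(t) − ηD̃₂(t)Λ₁²(w₁(t) − c)`, if
`‖D̃₂(t)‖ ≤ c_λ/(t+1)^α` and `‖w₁(t) − c‖₂ ≤ c_conv/(t+1)^β` with `α + β > 1`, then `w₂(t)`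
converges to some `w₂(∞)` with
`‖w₂(∞) − w₂(0)‖₂ ≤ η·c_λ·λ_max(Λ₁)²·(c_conv·(1 + 1/(α+β−1)) + ‖w₁(0)‖₂)`. -/

theorem stmt_13 {R s : ℕ}
    (D₂ : ℕ → Matrix (Fin s) (Fin R) ℝ)
    (g : Fin R → ℝ) (hg : ∀ i, 0 < g i) (c : Fin R → ℝ)
    (η clam cconv α β : ℝ) (hη : 0 < η) (hclam : 0 < clam) (hcconv : 0 < cconv)
    (hα : 0 ≤ α) (hβ : 0 ≤ β) (hαβ : 1 < α + β)
    (w₁ : ℕ → Fin R → ℝ) (w₂ : ℕ → Fin s → ℝ)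
    (hw₂ : ∀ t, w₂ (t + 1) = w₂ t
        - η • (D₂ t *ᵥ ((Matrix.diagonal g) ^ 2 *ᵥ (w₁ t - c))))
    (hD₂ : ∀ t, matOpNorm (D₂ t) ≤ clam / ((t : ℝ) + 1) ^ α)
    (hw₁ : ∀ t, euclNorm (w₁ t - c) ≤ cconv / ((t : ℝ) + 1) ^ β) :
    ∃ w₂inf : Fin s → ℝ, Tendsto w₂ atTop (nhds w₂inf) ∧
      euclNorm (w₂inf - w₂ 0)
        ≤ η * clam * (⨆ i, g i) ^ 2 * (cconv * (1 + 1 / (α + β - 1)) + euclNorm (w₁ 0)) := by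
  classical
  set p := α + β with hpdef
  have hp : 1 < p := hαβ
  set M := (⨆ i, g i) with hMdef
  have hM0 : 0 ≤ M ^ 2 := by
    rcases isEmpty_or_nonempty (Fin R) with h | h
    · simp [hMdef, Real.iSup_of_isEmpty]
    · have := (hg (Classical.arbitrary _)).trans_le
        (le_ciSup (Set.Finite.bddAbove (Set.finite_range g)) (Classical.arbitrary _))
      positivity
  set C := η * clam * M ^ 2 * cconv with hCdef
  have hC0 : 0 ≤ C := by positivity
  set e : (Fin s → ℝ) → EuclideanSpace ℝ (Fin s) :=
    fun v => (WithLp.equiv 2 (Fin s → ℝ)).symm v with hedef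
  set f : ℕ → EuclideanSpace ℝ (Fin s) := fun t => e (w₂ (t + 1) - w₂ t) with hfdef
  -- norm bound on increments
  have hfb : ∀ t, ‖f t‖ ≤ C * ((t : ℝ) + 1) ^ (-p) := by
    intro t
    have ht0 : (0:ℝ) < (t : ℝ) + 1 := by positivity
    have h1 : ‖f t‖ = η * euclNorm (D₂ t *ᵥ ((Matrix.diagonal g) ^ 2 *ᵥ (w₁ t - c))) := by
      rw [hfdef]
      simp only [hedef]
      rw [← euclNorm_eq, hw₂ t]
      have : w₂ t - η • (D₂ t *ᵥ ((Matrix.diagonal g) ^ 2 *ᵥ (w₁ t - c))) - w₂ t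
          = (-η) • (D₂ t *ᵥ ((Matrix.diagonal g) ^ 2 *ᵥ (w₁ t - c))) := by
        ext i
        simp only [Pi.sub_apply, Pi.smul_apply, smul_eq_mul, neg_smul, Pi.neg_apply]
        ring
      rw [this]
      unfold euclNorm
      rw [show ∀ v : Fin s → ℝ, ∑ i, ((-η) • v) i ^ 2 = η ^ 2 * ∑ i, v i ^ 2 from
        fun v => by
          rw [Finset.mul_sum]
          refine Finset.sum_congr rfl fun i _ => ?_
          simp only [Pi.smul_apply, smul_eq_mul]
          ring]
      rw [Real.sqrt_mul (sq_nonneg η), Real.sqrt_sq hη.le]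
    rw [h1]
    have h2 : euclNorm (D₂ t *ᵥ ((Matrix.diagonal g) ^ 2 *ᵥ (w₁ t - c)))
        ≤ (clam / ((t : ℝ) + 1) ^ α) * (M ^ 2 * (cconv / ((t : ℝ) + 1) ^ β)) := by
      calc euclNorm (D₂ t *ᵥ ((Matrix.diagonal g) ^ 2 *ᵥ (w₁ t - c)))
          ≤ matOpNorm (D₂ t) * euclNorm ((Matrix.diagonal g) ^ 2 *ᵥ (w₁ t - c)) :=
            euclNorm_mulVec_le _ _
        _ ≤ (clam / ((t : ℝ) + 1) ^ α) * (M ^ 2 * (cconv / ((t : ℝ) + 1) ^ β)) := by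
            have ha := euclNorm_diag_sq_mulVec_le g hg (w₁ t - c)
            have hb := hw₁ t
            have hc := hD₂ t
            have hnn := euclNorm_nonneg ((Matrix.diagonal g) ^ 2 *ᵥ (w₁ t - c))
            have hnn2 := euclNorm_nonneg (w₁ t - c)
            have hop : (0:ℝ) ≤ matOpNorm (D₂ t) := norm_nonneg _
            have step : euclNorm ((Matrix.diagonal g) ^ 2 *ᵥ (w₁ t - c))
                ≤ M ^ 2 * (cconv / ((t : ℝ) + 1) ^ β) :=
              ha.trans (by
                have := mul_le_mul_of_nonneg_left hb hM0
                exact this)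
            calc matOpNorm (D₂ t) * euclNorm ((Matrix.diagonal g) ^ 2 *ᵥ (w₁ t - c))
                ≤ matOpNorm (D₂ t) * (M ^ 2 * (cconv / ((t : ℝ) + 1) ^ β)) :=
                  mul_le_mul_of_nonneg_left step hop
              _ ≤ (clam / ((t : ℝ) + 1) ^ α) * (M ^ 2 * (cconv / ((t : ℝ) + 1) ^ β)) := by
                  apply mul_le_mul_of_nonneg_right hc
                  positivity
    calc η * euclNorm (D₂ t *ᵥ ((Matrix.diagonal g) ^ 2 *ᵥ (w₁ t - c)))
        ≤ η * ((clam / ((t : ℝ) + 1) ^ α) * (M ^ 2 * (cconv / ((t : ℝ) + 1) ^ β))) :=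
          mul_le_mul_of_nonneg_left h2 hη.le
      _ = C * ((t : ℝ) + 1) ^ (-p) := by
          rw [hCdef, hpdef, div_eq_mul_inv, div_eq_mul_inv,
            ← Real.rpow_neg ht0.le, ← Real.rpow_neg ht0.le, neg_add,
            Real.rpow_add ht0]
          ring
  have hsummable₀ : Summable (fun t : ℕ => C * ((t : ℝ) + 1) ^ (-p)) :=
    (summable_shift_rpow hp).mul_left C
  have hsum : Summable f := Summable.of_norm_bounded hsummable₀ hfb
  obtain ⟨S, hS⟩ := hsum
  -- partial sums telescope
  have htel : ∀ n, ∑ i ∈ Finset.range n, f i = e (w₂ n) - e (w₂ 0) := by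
    intro n
    have : ∀ i, f i = e (w₂ (i + 1)) - e (w₂ i) := by
      intro i
      rw [hfdef]
      simp only [hedef]
      exact (WithLp.equiv 2 (Fin s → ℝ)).symm.injective.eq_iff.mpr rfl
    simp_rw [this]
    exact Finset.sum_range_sub (fun k => e (w₂ k)) n
  have hten : Tendsto (fun n => e (w₂ n)) atTop (nhds (S + e (w₂ 0))) := by
    have h1 : Tendsto (fun n => ∑ i ∈ Finset.range n, f i) atTop (nhds S) :=
      hS.tendsto_sum_nat
    have h2 : Tendsto (fun n => e (w₂ n) - e (w₂ 0)) atTop (nhds S) := by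
      simpa only [htel] using h1
    have := h2.add_const (e (w₂ 0))
    simpa using this
  refine ⟨WithLp.equiv 2 (Fin s → ℝ) (S + e (w₂ 0)), ?_, ?_⟩
  · have hcont : Continuous (WithLp.equiv 2 (Fin s → ℝ)) := PiLp.continuous_ofLp 2 _
    have := (hcont.tendsto _).comp hten
    exact this
  · have hkey : euclNorm (WithLp.equiv 2 (Fin s → ℝ) (S + e (w₂ 0)) - w₂ 0) = ‖S‖ := by
      rw [euclNorm_eq]
      have h2 : (WithLp.equiv 2 (Fin s → ℝ)).symm
          (WithLp.equiv 2 (Fin s → ℝ) (S + e (w₂ 0)) - w₂ 0)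
          = (S + e (w₂ 0)) - e (w₂ 0) := rfl
      rw [h2, add_sub_cancel_right]
    rw [hkey]
    have hnorm : ‖S‖ ≤ ∑' t, ‖f t‖ := by
      rw [← hS.tsum_eq]
      exact norm_tsum_le_tsum_norm (hsummable₀.of_nonneg_of_le (fun t => norm_nonneg _) hfb)
    have hsn : Summable (fun t => ‖f t‖) :=
      hsummable₀.of_nonneg_of_le (fun t => norm_nonneg _) hfb
    have h3 : ∑' t, ‖f t‖ ≤ C * (1 + 1 / (p - 1)) := by
      calc ∑' t, ‖f t‖ ≤ ∑' t : ℕ, C * ((t : ℝ) + 1) ^ (-p) := Summable.tsum_le_tsum hfb hsn hsummable₀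
        _ = C * ∑' t : ℕ, ((t : ℝ) + 1) ^ (-p) := tsum_mul_left
        _ ≤ C * (1 + 1 / (p - 1)) :=
            mul_le_mul_of_nonneg_left (tsum_shift_rpow_le hp) hC0
    have h4 : 0 ≤ euclNorm (w₁ 0) := euclNorm_nonneg _
    have h5 : (0:ℝ) ≤ η * clam * M ^ 2 := by positivity
    have hfinal : C * (1 + 1 / (p - 1))
        ≤ η * clam * M ^ 2 * (cconv * (1 + 1 / (p - 1)) + euclNorm (w₁ 0)) := by
      rw [hCdef]
      nlinarith [mul_nonneg h5 h4]
    exact hnorm.trans (h3.trans hfinal)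
end

section
/- Let X ∈ ℝ^{n×d}, y ∈ ℝ^n, and suppose Xᵀy has no zero components. Define Q = diag(|Xᵀy|) and suppose there exists a scalar c such that X Q^{-1} sign(Xᵀy) = c·y. Consider the iteration initialized at w(0) = 0: w(k+1) = w(k) − α_k H_k^{-1} Xᵀ(Xw(k) − y), where H_k = ν_k Q² for scalars ν_k > 0 and α_k > 0. Then for every k, w(k) = λ_k Q^{-1} sign(Xᵀy) for some scalar λ_k; i.e., every iterate is proportional to Q^{-1} sign(Xᵀy). -/
open Matrix

/-- For the AdaGrad-variant iteration
`w(k+1) = w(k) − α_k H_k⁻¹ Xᵀ(Xw(k) − y)` with `H_k = ν_k Q²`, `Q = diag(|Xᵀy|)`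
(invertible since `Xᵀy` has no zero entries), initialized at `w(0) = 0`, and assuming
`X Q⁻¹ sign(Xᵀy) = c·y` for some scalar `c`, every iterate is proportional to
`Q⁻¹ sign(Xᵀy)`. -/
theorem stmt_14 {n d : ℕ} (X : Matrix (Fin n) (Fin d) ℝ) (y : Fin n → ℝ)
    (hXy : ∀ i, (Xᵀ *ᵥ y) i ≠ 0)
    (c : ℝ)
    (hc : X *ᵥ ((Matrix.diagonal fun i => |(Xᵀ *ᵥ y) i|)⁻¹ *ᵥ
        (fun i => Real.sign ((Xᵀ *ᵥ y) i))) = c • y)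
    (ν a : ℕ → ℝ) (hν : ∀ k, 0 < ν k) (ha : ∀ k, 0 < a k)
    (w : ℕ → Fin d → ℝ) (hw0 : w 0 = 0)
    (hw : ∀ k, w (k + 1) = w k
        - a k • ((ν k • (Matrix.diagonal fun i => |(Xᵀ *ᵥ y) i|) ^ 2)⁻¹ *ᵥ
            (Xᵀ *ᵥ (X *ᵥ w k - y)))) :
    ∀ k, ∃ lam : ℝ, w k = lam • ((Matrix.diagonal fun i => |(Xᵀ *ᵥ y) i|)⁻¹ *ᵥ
        (fun i => Real.sign ((Xᵀ *ᵥ y) i))) := by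
  set v : Fin d → ℝ := Xᵀ *ᵥ y with hv
  set u : Fin d → ℝ := (Matrix.diagonal fun i => |v i|)⁻¹ *ᵥ (fun i => Real.sign (v i))
    with hu
  have habs : ∀ i, |v i| ≠ 0 := fun i => abs_ne_zero.mpr (hXy i)
  have hQinv : (Matrix.diagonal fun i => |v i|)⁻¹ = Matrix.diagonal fun i => (|v i|)⁻¹ := by
    apply Matrix.inv_eq_right_inv
    rw [Matrix.diagonal_mul_diagonal]
    convert Matrix.diagonal_one with i
    exact mul_inv_cancel₀ (habs i)
  have hupt : ∀ i, u i = (|v i|)⁻¹ * Real.sign (v i) := by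
    intro i
    rw [hu, hQinv, Matrix.mulVec_diagonal]
  intro k
  induction k with
  | zero => exact ⟨0, by simp [hw0]⟩
  | succ k ih =>
    obtain ⟨lam, hlam⟩ := ih
    refine ⟨lam - a k * ((lam * c - 1) / ν k), ?_⟩
    have hres : X *ᵥ w k - y = (lam * c - 1) • y := by
      rw [hlam, Matrix.mulVec_smul, hc, smul_smul, sub_smul, one_smul]
    have hgrad : Xᵀ *ᵥ (X *ᵥ w k - y) = (lam * c - 1) • v := by
      rw [hres, Matrix.mulVec_smul, hv]
    have hνk : (ν k) ≠ 0 := (hν k).ne'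
    have hH : (ν k • (Matrix.diagonal fun i => |v i|) ^ 2)⁻¹
        = Matrix.diagonal fun i => (ν k * |v i| ^ 2)⁻¹ := by
      have : ν k • (Matrix.diagonal fun i => |v i|) ^ 2
          = Matrix.diagonal fun i => ν k * |v i| ^ 2 := by
        rw [Matrix.diagonal_pow, ← Matrix.diagonal_smul]
        rfl
      rw [this]
      apply Matrix.inv_eq_right_inv
      rw [Matrix.diagonal_mul_diagonal]
      convert Matrix.diagonal_one with i
      exact mul_inv_cancel₀ (mul_ne_zero hνk (pow_ne_zero 2 (habs i)))
    rw [hw k, hgrad, hH, hlam]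
    funext i
    have hsgn : Real.sign (v i) * |v i| = v i := by
      rcases (hXy i).lt_or_gt with h | h
      · rw [Real.sign_of_neg h, abs_of_neg h]; ring
      · rw [Real.sign_of_pos h, abs_of_pos h]; ring
    simp only [Pi.sub_apply, Pi.smul_apply, Matrix.mulVec_smul, Matrix.mulVec_diagonal,
      hupt i, smul_eq_mul]
    have key : ∀ s b : ℝ, b ≠ 0 →
        lam * (b⁻¹ * s) - a k * ((ν k * b ^ 2)⁻¹ * ((lam * c - 1) * (s * b)))
          = (lam - a k * ((lam * c - 1) / ν k)) * (b⁻¹ * s) := by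
      intro s b hb
      field_simp
    have := key (Real.sign (v i)) |v i| (habs i)
    rw [hsgn] at this
    linarith [this]
end
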